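/- arXiv:2405.11132 — 4 statements merged into one kernel-verified Lean document; each statement's English description precedes it below -/
import Mathlib

section
/- Let n = ℓ₁⋯ℓ_k be a square-free positive integer with n ≡ 3 (mod 4), where ℓ₁,…,ℓ_k are distinct odd primes. Let A = (a_{ij}) ∈ M_{k×k}(𝔽₂) be defined by a_{ij} = [ℓ_j/ℓ_i] (the additive Legendre symbol, equal to 0 if ℓ_j is a quadratic residue mod ℓ_i and 1 otherwise) for i ≠ j, and a_{ii} = Σ_{j≠i} a_{ij}. Let z_{-1} = ([-1/ℓ₁],…,[-1/ℓ_k])ᵀ ∈ 𝔽₂^k and D_{-1} = diag(z_{-1}). Then rank(A + D_{-1}) = rank(A) + 1. -/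
open Matrix

/-- The additive Legendre symbol `[d/p] ∈ 𝔽₂`: `0` iff `d` is a square mod `p`. -/
noncomputable def addLeg (d : ℤ) (p : ℕ) : ZMod 2 :=
  letI := Classical.dec (IsSquare ((d : ZMod p)))
  if IsSquare ((d : ZMod p)) then 0 else 1

/-- The Rédei-type matrix `A = (a_{ij})` associated to `n = ℓ₁⋯ℓ_k`:
`a_{ij} = [ℓ_j/ℓ_i]` for `i ≠ j` and `a_{ii} = Σ_{j≠i} a_{ij}`. -/
noncomputable def matA (k : ℕ) (ℓ : Fin k → ℕ) : Matrix (Fin k) (Fin k) (ZMod 2) :=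
  Matrix.of fun i j =>
    if i = j then ∑ j' ∈ Finset.univ.erase i, addLeg (ℓ j') (ℓ i)
    else addLeg (ℓ j) (ℓ i)

/-- The vector `z_d = ([d/ℓ₁],…,[d/ℓ_k])ᵀ ∈ 𝔽₂^k`. -/
noncomputable def vecZ (k : ℕ) (ℓ : Fin k → ℕ) (d : ℤ) : Fin k → ZMod 2 :=
  fun i => addLeg d (ℓ i)

/-! Over `𝔽₂`, quadratic reciprocity says `A + Aᵀ = z zᵀ + D` for `z = z_{-1}` and
`D = diag z`, so `A + D = Aᵀ + z zᵀ` is a rank-one update of `Aᵀ`. Such an update raises the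
rank by one as soon as `z` lies neither in the column space nor in the row space of `Aᵀ`, and
the all-ones vector `𝟙` certifies both: `A 𝟙 = 0` and `𝟙ᵀ A = 0` (the latter from the identity
above), while `𝟙 ⬝ z = 1` because `n ≡ 3 (mod 4)` forces an odd number of the `ℓᵢ` to be
`3 (mod 4)`. -/

open Module LinearMap in
theorem Submodule.finrank_inf_ker_add_one {K V : Type*} [Field K] [AddCommGroup V] [Module K V]
    {S : Submodule K V} [FiniteDimensional K S] {φ : Dual K V} {e : V} (he : e ∈ S)
    (hφe : φ e ≠ 0) :
    finrank K ↥(S ⊓ ker φ) + 1 = finrank K S := by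
  have hne : φ.domRestrict S ≠ 0 := fun h => hφe (LinearMap.congr_fun h ⟨e, he⟩)
  rw [← Dual.finrank_ker_add_one_of_ne_zero hne, ker_domRestrict, ← Submodule.map_comap_subtype,
    Submodule.finrank_map_subtype_eq]

namespace LinearMap

variable {K V W : Type*} [Field K] [AddCommGroup V] [Module K V] [AddCommGroup W] [Module K W]

open Module

theorem ker_add_smulRight_eq_inf {f : V →ₗ[K] W} {φ : Dual K V} {ψ : Dual K W} {u : W}
    (hψf : ψ ∘ₗ f = 0) (hψu : ψ u ≠ 0) :
    ker (f + φ.smulRight u) = ker f ⊓ ker φ := by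
  ext x
  simp only [mem_ker, Submodule.mem_inf, add_apply, smulRight_apply]
  constructor
  · intro hx
    have hφx : φ x = 0 := by
      have h := congrArg ψ hx
      rw [map_add, ← comp_apply, hψf, map_smul, zero_apply, zero_add, smul_eq_mul, map_zero] at h
      exact (mul_eq_zero.mp h).resolve_right hψu
    exact ⟨by simpa [hφx] using hx, hφx⟩
  · rintro ⟨hfx, hφx⟩
    simp [hfx, hφx]

theorem finrank_range_add_smulRight [FiniteDimensional K V] {f : V →ₗ[K] W} {φ : Dual K V}
    {ψ : Dual K W} {u : W} {e : V} (hψf : ψ ∘ₗ f = 0) (hψu : ψ u ≠ 0) (he : f e = 0)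
    (hφe : φ e ≠ 0) :
    finrank K (range (f + φ.smulRight u)) = finrank K (range f) + 1 := by
  have h₁ := finrank_range_add_finrank_ker (f + φ.smulRight u)
  have h₂ := finrank_range_add_finrank_ker f
  have h₃ := Submodule.finrank_inf_ker_add_one (mem_ker.mpr he) hφe
  rw [ker_add_smulRight_eq_inf hψf hψu] at h₁
  omega

end LinearMap

theorem Matrix.rank_add_vecMulVec {m n K : Type*} [Fintype m] [Fintype n] [Field K]
    (M : Matrix m n K) {u w : m → K} {v e : n → K} (hw : w ᵥ* M = 0) (hwu : w ⬝ᵥ u ≠ 0)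
    (he : M *ᵥ e = 0) (hve : v ⬝ᵥ e ≠ 0) :
    (M + vecMulVec u v).rank = M.rank + 1 := by
  have hlin : (M + vecMulVec u v).mulVecLin =
      M.mulVecLin + (dotProductBilin K K v).smulRight u := by
    ext x : 1
    simp [vecMulVec_mulVec]
  have hψ : dotProductBilin K K w ∘ₗ M.mulVecLin = 0 := by
    ext x : 1
    simp [dotProduct_mulVec, hw]
  rw [rank, hlin]
  exact LinearMap.finrank_range_add_smulRight hψ hwu he hve

lemma addLeg_eq_of_iff {d e : ℤ} {p q : ℕ}
    (h : IsSquare (d : ZMod p) ↔ IsSquare (e : ZMod q)) : addLeg d p = addLeg e q := by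
  unfold addLeg
  split_ifs <;> tauto

lemma addLeg_eq_add_one_of_iff_not {d e : ℤ} {p q : ℕ}
    (h : IsSquare (d : ZMod p) ↔ ¬IsSquare (e : ZMod q)) : addLeg d p = addLeg e q + 1 := by
  unfold addLeg
  split_ifs <;> tauto

lemma addLeg_neg_one {p : ℕ} [Fact p.Prime] : addLeg (-1) p = if p % 4 = 3 then 1 else 0 := by
  unfold addLeg
  push_cast
  by_cases h : p % 4 = 3 <;> simp [ZMod.exists_sq_eq_neg_one_iff, h]

lemma addLeg_reciprocity {p q : ℕ} [Fact p.Prime] [Fact q.Prime] (hp : p ≠ 2) (hq : q ≠ 2)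
    (hpq : p ≠ q) :
    addLeg q p + addLeg p q = addLeg (-1) p * addLeg (-1) q := by
  have hp4 := Nat.odd_mod_four_iff.mp ((Fact.out : p.Prime).mod_two_eq_one_iff_ne_two.mpr hp)
  have hq4 := Nat.odd_mod_four_iff.mp ((Fact.out : q.Prime).mod_two_eq_one_iff_ne_two.mpr hq)
  rw [addLeg_neg_one, addLeg_neg_one]
  rcases hp4 with hp1 | hp3
  · rw [addLeg_eq_of_iff (d := q) (e := p)
        (by exact_mod_cast ZMod.exists_sq_eq_prime_iff_of_mod_four_eq_one hp1 hq),
      if_neg (show p % 4 ≠ 3 by omega), zero_mul]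
    exact CharTwo.add_self_eq_zero _
  rcases hq4 with hq1 | hq3
  · rw [addLeg_eq_of_iff (d := p) (e := q)
        (by exact_mod_cast ZMod.exists_sq_eq_prime_iff_of_mod_four_eq_one hq1 hp),
      if_neg (show q % 4 ≠ 3 by omega), mul_zero]
    exact CharTwo.add_self_eq_zero _
  · rw [addLeg_eq_add_one_of_iff_not (d := q) (e := p)
        (by exact_mod_cast ZMod.exists_sq_eq_prime_iff_of_mod_four_eq_three hp3 hq3 hpq),
      if_pos hp3, if_pos hq3, add_right_comm, CharTwo.add_self_eq_zero, zero_add, one_mul]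

lemma ite_mul_mod_four_eq_three {a b : ℕ} (ha : Odd a) (hb : Odd b) :
    (if a * b % 4 = 3 then (1 : ZMod 2) else 0) =
      (if a % 4 = 3 then 1 else 0) + (if b % 4 = 3 then 1 else 0) := by
  rcases Nat.odd_mod_four_iff.mp (Nat.odd_iff.mp ha) with ha4 | ha4 <;>
  rcases Nat.odd_mod_four_iff.mp (Nat.odd_iff.mp hb) with hb4 | hb4 <;>
  simp [Nat.mul_mod, ha4, hb4, CharTwo.add_self_eq_zero]

lemma sum_ite_mod_four_eq_three {ι : Type*} (s : Finset ι) {m : ι → ℕ}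
    (hm : ∀ i ∈ s, Odd (m i)) :
    ∑ i ∈ s, (if m i % 4 = 3 then (1 : ZMod 2) else 0) =
      if (∏ i ∈ s, m i) % 4 = 3 then 1 else 0 := by
  classical
  induction s using Finset.induction_on with
  | empty => simp
  | insert a s ha ih =>
    have hms : ∀ i ∈ s, Odd (m i) := fun i hi => hm i (Finset.mem_insert_of_mem hi)
    have hprod : Odd (∏ i ∈ s, m i) := Finset.prod_induction _ Odd (fun _ _ => Odd.mul) odd_one hms
    rw [Finset.sum_insert ha, Finset.prod_insert ha,
      ite_mul_mod_four_eq_three (hm a (Finset.mem_insert_self a s)) hprod, ih hms]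

lemma sum_vecZ_neg_one {k : ℕ} {ℓ : Fin k → ℕ} (hprime : ∀ i, (ℓ i).Prime)
    (hodd : ∀ i, Odd (ℓ i)) (hmod : (∏ i, ℓ i) % 4 = 3) :
    ∑ i, vecZ k ℓ (-1) i = 1 := by
  have hz : ∀ i, vecZ k ℓ (-1) i = if ℓ i % 4 = 3 then 1 else 0 := fun i =>
    have := Fact.mk (hprime i)
    addLeg_neg_one
  simp only [hz, sum_ite_mod_four_eq_three _ fun i _ => hodd i, hmod, if_true]

lemma matA_mulVec_one (k : ℕ) (ℓ : Fin k → ℕ) : matA k ℓ *ᵥ 1 = 0 := by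
  ext i
  simp only [mulVec, dotProduct, Pi.one_apply, mul_one, Pi.zero_apply]
  rw [← Finset.add_sum_erase _ _ (Finset.mem_univ i)]
  have hoff : ∀ j ∈ Finset.univ.erase i, matA k ℓ i j = addLeg (ℓ j) (ℓ i) := fun j hj => by
    simp [matA, (Finset.ne_of_mem_erase hj).symm]
  rw [Finset.sum_congr rfl hoff]
  simpa [matA] using CharTwo.add_self_eq_zero _

lemma matA_add_diagonal {k : ℕ} {ℓ : Fin k → ℕ} (hprime : ∀ i, (ℓ i).Prime)
    (hodd : ∀ i, Odd (ℓ i)) (hinj : Function.Injective ℓ) :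
    matA k ℓ + diagonal (vecZ k ℓ (-1)) =
      (matA k ℓ)ᵀ + vecMulVec (vecZ k ℓ (-1)) (vecZ k ℓ (-1)) := by
  ext i j
  rcases eq_or_ne i j with rfl | hij
  · have hsq : ∀ x : ZMod 2, x = x * x := by decide
    simp [vecMulVec_apply, ← hsq]
  · have := Fact.mk (hprime i)
    have := Fact.mk (hprime j)
    have hrec := addLeg_reciprocity ((hodd i).ne_two_of_dvd_nat dvd_rfl)
      ((hodd j).ne_two_of_dvd_nat dvd_rfl) (hinj.ne hij)
    simp only [Matrix.add_apply, diagonal_apply_ne _ hij, add_zero, transpose_apply,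
      vecMulVec_apply, matA, of_apply, if_neg hij, if_neg hij.symm, vecZ, ← hrec]
    rw [add_left_comm, CharTwo.add_self_eq_zero, add_zero]

lemma one_vecMul_matA {k : ℕ} {ℓ : Fin k → ℕ} (hprime : ∀ i, (ℓ i).Prime)
    (hodd : ∀ i, Odd (ℓ i)) (hinj : Function.Injective ℓ) (hmod : (∏ i, ℓ i) % 4 = 3) :
    1 ᵥ* matA k ℓ = 0 := by
  have h : matA k ℓ = (matA k ℓ)ᵀ + vecMulVec (vecZ k ℓ (-1)) (vecZ k ℓ (-1)) +
      diagonal (vecZ k ℓ (-1)) := by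
    rw [← matA_add_diagonal hprime hodd hinj, add_assoc, diagonal_add]
    simp [CharTwo.add_self_eq_zero]
  rw [h, vecMul_add, vecMul_add, vecMul_transpose, matA_mulVec_one, vecMul_vecMulVec,
    one_dotProduct, sum_vecZ_neg_one hprime hodd hmod, one_smul, zero_add]
  ext i
  simp [vecMul_diagonal, CharTwo.add_self_eq_zero]

theorem rank_A_add_D_neg_one_general (k : ℕ) (ℓ : Fin k → ℕ) (n : ℕ)
    (hprime : ∀ i, (ℓ i).Prime) (hodd : ∀ i, Odd (ℓ i))
    (hinj : Function.Injective ℓ)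
    (hn : n = ∏ i, ℓ i) (hmod : n % 4 = 3) :
    (matA k ℓ + Matrix.diagonal (vecZ k ℓ (-1))).rank = (matA k ℓ).rank + 1 := by
  subst hn
  have hsum : (1 : Fin k → ZMod 2) ⬝ᵥ vecZ k ℓ (-1) = 1 := by
    rw [one_dotProduct, sum_vecZ_neg_one hprime hodd hmod]
  rw [matA_add_diagonal hprime hodd hinj, rank_add_vecMulVec _ (w := 1) (e := 1)
      (by rw [vecMul_transpose, matA_mulVec_one]) (by rw [hsum]; exact one_ne_zero)
      (by rw [mulVec_transpose, one_vecMul_matA hprime hodd hinj hmod])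
      (by rw [dotProduct_comm, hsum]; exact one_ne_zero),
    rank_transpose]

/-- For `n = ℓ₁⋯ℓ_k` square-free positive with `n ≡ 3 (mod 4)`,
`rank(A + D_{-1}) = rank(A) + 1` over `𝔽₂`. -/
theorem rank_A_add_D_neg_one (k : ℕ) (ℓ : Fin k → ℕ) (n : ℕ)
    (hprime : ∀ i, (ℓ i).Prime) (hodd : ∀ i, Odd (ℓ i))
    (hinj : Function.Injective ℓ)
    (hn : n = ∏ i, ℓ i) (hsf : Squarefree n) (hmod : n % 4 = 3) :
    (matA k ℓ + Matrix.diagonal (vecZ k ℓ (-1))).rank = (matA k ℓ).rank + 1 :=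
  rank_A_add_D_neg_one_general k ℓ n hprime hodd hinj hn hmod
end

section
/- Let A ∈ M_{k×k}(𝔽₂) and z_{-1} ∈ 𝔽₂^k satisfy: A + Aᵀ = z_{-1}z_{-1}ᵀ + diag(z_{-1}), every row of A sums to 0, every column of A sums to 0, and the entries of z_{-1} sum to 1. Then the rank of the (k+1)×k block matrix formed by stacking A + diag(z_{-1}) on top of the row vector z_{-1}ᵀ equals rank(A) + 1. -/
/-!
Over `𝔽₂` the hypothesis on `A + Aᵀ` says `A + diag(z) = Aᵀ + zzᵀ`, so row `i` of the stacked
matrix is row `i` of `Aᵀ` plus `zᵢ` times the appended row `zᵀ`. This unipotent row operation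
shows that the stacked matrix has the rank of `Aᵀ` stacked on `zᵀ`. Since the columns of `A` sum
to `0`, all rows of `Aᵀ` lie in the hyperplane of vectors with coordinate sum `0`, which `z`
avoids; hence appending `zᵀ` raises the rank by one.
-/

open Matrix

namespace Matrix

variable {m n K : Type*}

theorem rank_fromRows_replicateRow_of_notMem_span [Field K] [Fintype m] [Fintype n]
    (M : Matrix m n K) {v : n → K} (hv : v ∉ Submodule.span K (Set.range M.row)) :
    (fromRows M (replicateRow Unit v)).rank = M.rank + 1 := by
  have hrows : (fromRows M (replicateRow Unit v)).row = Sum.elim M.row fun _ => v := by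
    ext (i | i) <;> rfl
  rw [rank_eq_finrank_span_row, rank_eq_finrank_span_row, hrows, Set.Sum.elim_range,
    Set.range_const, Submodule.span_union, Submodule.finrank_sup_span_singleton hv]

theorem rank_fromRows_add_vecMulVec [CommRing K] [Fintype m] [Fintype n] [DecidableEq m]
    (M : Matrix m n K) (u : m → K) (v : n → K) :
    (fromRows (M + vecMulVec u v) (replicateRow Unit v)).rank
      = (fromRows M (replicateRow Unit v)).rank := by
  have hfactor : fromRows (M + vecMulVec u v) (replicateRow Unit v)
      = (fromBlocks 1 (replicateCol Unit u) 0 1 : Matrix (m ⊕ Unit) (m ⊕ Unit) K)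
        * fromRows M (replicateRow Unit v) := by
    rw [fromBlocks_mul_fromRows, vecMulVec_eq Unit]
    simp
  rw [hfactor, rank_mul_eq_right_of_isUnit_det]
  simp

end Matrix

theorem notMem_span_of_sum_eq_zero {n K : Type*} [Fintype n] [CommRing K] {S : Set (n → K)}
    (hS : ∀ s ∈ S, ∑ i, s i = 0) {v : n → K} (hv : ∑ i, v i ≠ 0) :
    v ∉ Submodule.span K S := by
  let sum : (n → K) →ₗ[K] K := ∑ i, LinearMap.proj i
  have hsum (w : n → K) : sum w = ∑ i, w i := by simp [sum]
  have hle : Submodule.span K S ≤ LinearMap.ker sum :=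
    Submodule.span_le.mpr fun s hs => by simpa [hsum] using hS s hs
  exact fun hmem => hv (by simpa [hsum] using hle hmem)

theorem rank_stack_eq_rank_add_one_general (k : ℕ)
    (A : Matrix (Fin k) (Fin k) (ZMod 2)) (z : Fin k → ZMod 2)
    (hsym : A + Aᵀ = Matrix.vecMulVec z z + Matrix.diagonal z)
    (hcol : ∀ j, ∑ i, A i j = 0)
    (hz : ∑ i, z i = 1) :
    (Matrix.fromRows (A + Matrix.diagonal z) (Matrix.replicateRow Unit z)).rank
      = A.rank + 1 := by
  have hstack : A + diagonal z = Aᵀ + vecMulVec z z := by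
    ext i j
    have h := congr_fun₂ hsym i j
    simp only [Matrix.add_apply, transpose_apply] at h ⊢
    grind
  have hz_notMem : z ∉ Submodule.span (ZMod 2) (Set.range Aᵀ.row) := by
    refine notMem_span_of_sum_eq_zero ?_ (hz ▸ one_ne_zero)
    rintro _ ⟨j, rfl⟩
    exact hcol j
  rw [hstack, rank_fromRows_add_vecMulVec, rank_fromRows_replicateRow_of_notMem_span _ hz_notMem,
    rank_transpose]

/-- Rédei-matrix rank identity: if `A ∈ M_{k×k}(𝔽₂)` and `z ∈ 𝔽₂^k` satisfy
`A + Aᵀ = zzᵀ + diag(z)`, all rows and columns of `A` sum to `0`, and the entries of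
`z` sum to `1`, then the rank of the `(k+1)×k` matrix obtained by stacking
`A + diag(z)` on top of `zᵀ` equals `rank(A) + 1`. -/
theorem rank_stack_eq_rank_add_one (k : ℕ)
    (A : Matrix (Fin k) (Fin k) (ZMod 2)) (z : Fin k → ZMod 2)
    (hsym : A + Aᵀ = Matrix.vecMulVec z z + Matrix.diagonal z)
    (hrow : ∀ i, ∑ j, A i j = 0) (hcol : ∀ j, ∑ i, A i j = 0)
    (hz : ∑ i, z i = 1) :
    (Matrix.fromRows (A + Matrix.diagonal z) (Matrix.replicateRow Unit z)).rank
      = A.rank + 1 :=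
  rank_stack_eq_rank_add_one_general k A z hsym hcol hz
end

section
/- Let k ≥ 2, let B ∈ M_{k×k}(𝔽₂) be an invertible matrix all of whose columns sum to a fixed vector w ∈ 𝔽₂^k with sum of entries of w equal to 1. Let H = {z ∈ 𝔽₂^k : sum of entries of z is 0}. Then the number of pairs (z₂, z₃) ∈ H × H with z₂ᵀ B^{−1} z₃ = 0 equals 2^{k−2}(2^{k−1} − 1) + 2^{k−1}; in particular the proportion among all pairs in H × H is 1/2 + 2^{−k}. -/
/-!
The count works over any finite field with `q` elements. Count the pairs fibrewise over
`z₃ ∈ H`. For `z₃ = 0` every `z₂ ∈ H` qualifies. For `z₃ ≠ 0` the vector `v = B⁻¹ z₃` is not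
constant: if `v = c • 1` then `z₃ = c • B 1`, and since the coordinate sum of `B 1` is nonzero
while that of `z₃` vanishes, `c = 0`. So `z ↦ z ⬝ᵥ v` is a nonzero linear form on `H`, and its
kernel has `|H| / q` elements. With `|H| = q ^ (k - 1)` this gives
`q ^ (k - 1) + (q ^ (k - 1) - 1) q ^ (k - 2)` pairs.
-/

open Matrix Finset

section LinearForm

variable {K V : Type*} [Field K] [Fintype K] [AddCommGroup V] [Module K V]

theorem LinearMap.card_ker_mul_card_of_ne_zero (φ : V →ₗ[K] K) (hφ : φ ≠ 0) :
    Nat.card {x // φ x = 0} * Fintype.card K = Nat.card V := by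
  have hrange : Nat.card φ.toAddMonoidHom.range = Fintype.card K := by
    rw [AddMonoidHom.range_eq_top_of_surjective _ (LinearMap.surjective_of_ne_zero hφ)]
    simp [Nat.card_eq_fintype_card]
  rw [← hrange, ← AddSubgroup.index_ker]
  exact AddSubgroup.card_mul_index φ.toAddMonoidHom.ker

theorem LinearMap.card_ker_inf_mul_card (φ ψ : V →ₗ[K] K) (h : ∃ x, φ x = 0 ∧ ψ x ≠ 0) :
    Nat.card {x // φ x = 0 ∧ ψ x = 0} * Fintype.card K = Nat.card {x // φ x = 0} := by
  obtain ⟨x, hφx, hψx⟩ := h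
  have hne : ψ.domRestrict (LinearMap.ker φ) ≠ 0 := fun h0 =>
    hψx (LinearMap.congr_fun h0 ⟨x, hφx⟩)
  rw [← Nat.card_congr (Equiv.subtypeSubtypeEquivSubtypeInter (φ · = 0) (ψ · = 0))]
  exact (ψ.domRestrict (LinearMap.ker φ)).card_ker_mul_card_of_ne_zero hne

end LinearForm

theorem Nat.card_subtype_prod_eq_sum {α β : Type*} [Finite α] [Fintype β] (P : α → β → Prop) :
    Nat.card {p : α × β // P p.1 p.2} = ∑ b, Nat.card {a // P a b} := by
  rw [← Nat.card_sigma]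
  exact Nat.card_congr (((Equiv.prodComm α β).subtypeEquiv fun _ => Iff.rfl).trans
    (Equiv.subtypeProdEquivSigmaSubtype fun b a => P a b))

theorem exists_mulVec_inv_ne {K ι : Type*} [Field K] [Fintype ι] [DecidableEq ι]
    {B : Matrix ι ι K} (hB : IsUnit B.det) (hB1 : ∑ i, (B *ᵥ 1) i ≠ 0)
    {z : ι → K} (hz : ∑ i, z i = 0) (hz0 : z ≠ 0) : ∃ i j, (B⁻¹ *ᵥ z) i ≠ (B⁻¹ *ᵥ z) j := by
  obtain ⟨i₀, -⟩ := Function.ne_iff.1 hz0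
  by_contra! hconst
  set c := (B⁻¹ *ᵥ z) i₀
  have hv : B⁻¹ *ᵥ z = c • 1 := funext fun j => by simp [c, hconst j i₀]
  have hzB : z = c • (B *ᵥ 1) := by
    rw [← mulVec_smul, ← hv, mulVec_mulVec, mul_nonsing_inv B hB, one_mulVec]
  have hc : c = 0 := by
    rw [hzB] at hz
    simpa [← Finset.mul_sum, hB1] using hz
  exact hz0 (by rw [hzB, hc, zero_smul])

section SumZero

variable {K ι : Type*} [Field K] [Fintype K] [Fintype ι]

theorem card_sum_eq_zero [Nonempty ι] :
    Nat.card {z : ι → K // ∑ i, z i = 0} = Fintype.card K ^ (Fintype.card ι - 1) := by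
  classical
  have hne : dotProductBilin K K (1 : ι → K) ≠ 0 := fun h => by
    simpa using LinearMap.congr_fun h (Pi.single (Classical.arbitrary ι) 1)
  have key := (dotProductBilin K K (1 : ι → K)).card_ker_mul_card_of_ne_zero hne
  simp only [dotProductBilin_apply_apply, one_dotProduct, Nat.card_eq_fintype_card (α := ι → K),
    Fintype.card_fun] at key
  exact Nat.eq_of_mul_eq_mul_right (Fintype.card_pos (α := K))
    (key.trans (pow_sub_one_mul Fintype.card_ne_zero _).symm)

theorem card_sum_eq_zero_dotProduct_eq_zero_mul {v : ι → K} (hv : ∃ i j, v i ≠ v j) :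
    Nat.card {z : ι → K // ∑ i, z i = 0 ∧ z ⬝ᵥ v = 0} * Fintype.card K =
      Nat.card {z : ι → K // ∑ i, z i = 0} := by
  classical
  obtain ⟨i, j, hij⟩ := hv
  have key := LinearMap.card_ker_inf_mul_card (dotProductBilin K K (1 : ι → K))
    (dotProductBilin K K v)
    ⟨Pi.single i 1 - Pi.single j 1, by simp, by simpa [sub_eq_zero] using hij⟩
  simpa only [dotProductBilin_apply_apply, one_dotProduct, dotProduct_comm v] using key

theorem card_pairs_sum_eq_zero_dotProduct_mulVec_inv_eq_zero [DecidableEq ι]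
    (hι : 2 ≤ Fintype.card ι) {B : Matrix ι ι K} (hB : IsUnit B.det)
    (hB1 : ∑ i, (B *ᵥ 1) i ≠ 0) :
    Nat.card {p : (ι → K) × (ι → K) //
        (∑ i, p.1 i = 0) ∧ (∑ i, p.2 i = 0) ∧ p.1 ⬝ᵥ (B⁻¹ *ᵥ p.2) = 0} =
      Fintype.card K ^ (Fintype.card ι - 2) * (Fintype.card K ^ (Fintype.card ι - 1) - 1) +
        Fintype.card K ^ (Fintype.card ι - 1) := by
  classical
  set q := Fintype.card K
  set H : Finset (ι → K) := univ.filter fun z => ∑ i, z i = 0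
  have : Nonempty ι := Fintype.card_pos_iff.1 (by omega)
  have hH : #H = q ^ (Fintype.card ι - 1) := by
    rw [← card_sum_eq_zero, Nat.card_eq_fintype_card, Fintype.card_subtype]
  have h0 : (0 : ι → K) ∈ H := by simp [H]
  have hfiber : ∀ z ∈ H.erase 0,
      Nat.card {y : ι → K // ∑ i, y i = 0 ∧ y ⬝ᵥ (B⁻¹ *ᵥ z) = 0} = q ^ (Fintype.card ι - 2) := by
    intro z hz
    obtain ⟨hz0, hz⟩ := Finset.mem_erase.1 hz
    have key := card_sum_eq_zero_dotProduct_eq_zero_mul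
      (exists_mulVec_inv_ne hB hB1 (Finset.mem_filter.1 hz).2 hz0)
    rw [card_sum_eq_zero, show Fintype.card ι - 1 = Fintype.card ι - 2 + 1 by omega,
      pow_succ] at key
    exact Nat.eq_of_mul_eq_mul_right Fintype.card_pos key
  rw [Nat.card_subtype_prod_eq_sum fun y z : ι → K =>
    ∑ i, y i = 0 ∧ ∑ i, z i = 0 ∧ y ⬝ᵥ (B⁻¹ *ᵥ z) = 0]
  calc ∑ z, Nat.card {y : ι → K // ∑ i, y i = 0 ∧ ∑ i, z i = 0 ∧ y ⬝ᵥ (B⁻¹ *ᵥ z) = 0}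
      = ∑ z ∈ H, Nat.card {y : ι → K // ∑ i, y i = 0 ∧ y ⬝ᵥ (B⁻¹ *ᵥ z) = 0} := by
        rw [Finset.sum_filter]
        refine Finset.sum_congr rfl fun z _ => ?_
        split_ifs with hz <;> simp [hz]
    _ = Nat.card {y : ι → K // ∑ i, y i = 0} + (#H - 1) * q ^ (Fintype.card ι - 2) := by
        rw [← Finset.add_sum_erase _ _ h0, Finset.sum_congr rfl hfiber, Finset.sum_const,
          Finset.card_erase_of_mem h0, smul_eq_mul]
        simp
    _ = _ := by rw [card_sum_eq_zero, hH]; ring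

end SumZero

/-- Counting lemma over `𝔽₂`: if `B` is invertible with all columns summing to a
vector `w` of coordinate sum `1`, and `H = {z : Σᵢ zᵢ = 0}`, then the number of
pairs `(z₂, z₃) ∈ H × H` with `z₂ᵀ B⁻¹ z₃ = 0` equals
`2^{k−2}(2^{k−1} − 1) + 2^{k−1}`; the proportion among all pairs is `1/2 + 2^{−k}`. -/
theorem count_pairs_bilinear_zero (k : ℕ) (hk : 2 ≤ k)
    (B : Matrix (Fin k) (Fin k) (ZMod 2)) (hB : IsUnit B.det)
    (w : Fin k → ZMod 2) (hcol : ∀ i, ∑ j, B i j = w i) (hw : ∑ i, w i = 1) :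
    Nat.card {p : (Fin k → ZMod 2) × (Fin k → ZMod 2) //
        (∑ i, p.1 i = 0) ∧ (∑ i, p.2 i = 0) ∧ p.1 ⬝ᵥ (B⁻¹ *ᵥ p.2) = 0}
      = 2 ^ (k - 2) * (2 ^ (k - 1) - 1) + 2 ^ (k - 1) ∧
    ((Nat.card {p : (Fin k → ZMod 2) × (Fin k → ZMod 2) //
        (∑ i, p.1 i = 0) ∧ (∑ i, p.2 i = 0) ∧ p.1 ⬝ᵥ (B⁻¹ *ᵥ p.2) = 0} : ℝ) /
      ((2 : ℝ) ^ (k - 1)) ^ 2) = 1 / 2 + (2 : ℝ) ^ (-(k : ℤ)) := by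
  have hB1 : ∑ i, (B *ᵥ 1) i ≠ 0 := by
    simp only [mulVec, dotProduct, Pi.one_apply, mul_one, hcol, hw]
    exact one_ne_zero
  have hcount := card_pairs_sum_eq_zero_dotProduct_mulVec_inv_eq_zero
    (by rwa [Fintype.card_fin]) hB hB1
  rw [ZMod.card, Fintype.card_fin] at hcount
  refine ⟨hcount, ?_⟩
  obtain ⟨m, rfl⟩ : ∃ m, k = m + 2 := ⟨k - 2, by omega⟩
  rw [hcount, Nat.add_sub_cancel, show m + 2 - 1 = m + 1 by omega, _root_.zpow_neg, zpow_natCast]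
  push_cast [Nat.one_le_two_pow]
  field_simp
  ring
end

section
/- Let n ≡ 7 (mod 24) be square-free with prime factors ℓ₁,…,ℓ_k, and let A, z_d, D_d be the associated 𝔽₂-data. Then det([[A + D_{-1}, z_{-3}],[z₂ᵀ, 1]]) = det([[z_{-1}z_{-2}ᵀ + z₂z_{-1}ᵀ, Aᵀ + D_{-1}],[A + D_{-1}, D_{-3}]]) in 𝔽₂. -/
open Matrix

/-!
Write `u = z_{-1}`, `v = z₂`, `w = z_{-3}` and `M = A + D_{-1}`. Quadratic reciprocity gives
`a_{ij} + a_{ji} = uᵢ uⱼ`, which together with `Σ uᵢ = 1` makes every column sum of `M` equal to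
the corresponding entry of `u`. A Schur complement turns the left side into `det (M + w vᵀ)`.
On the right, `z_{-2} = u + v`, and one column operation and one row operation built from the
all-ones vector (using `Σ wᵢ = 0`) bring the block matrix to `[[0, P], [M + w vᵀ, D_{-3}]]` with
`Pᵀ = (1 + w 1ᵀ)(M + w vᵀ)`. So the right side is `det (M + w vᵀ)²`, which over `𝔽₂` is the left
side. The two sums are Jacobi symbols of `n`: `Σ uᵢ = 1` since `(-1/n) = -1`, and `Σ wᵢ = 0`
since `(-3/n) = 1`.
-/

open scoped NumberTheorySymbols

/-- `x ↦ (-1) ^ x.val` identifies `ZMod 2` with `{±1}`; through it `addLeg` becomes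
`legendreSym`. -/
theorem neg_one_pow_val_add (x y : ZMod 2) :
    (-1 : ℤ) ^ (x + y).val = (-1) ^ x.val * (-1) ^ y.val := by
  revert x y; decide

theorem neg_one_pow_val_injective : Function.Injective fun x : ZMod 2 => (-1 : ℤ) ^ x.val := by
  intro x y; revert x y; decide

theorem neg_one_pow_val_natCast (m : ℕ) : (-1 : ℤ) ^ (m : ZMod 2).val = (-1) ^ m := by
  rw [ZMod.val_natCast, ← neg_one_pow_eq_pow_mod_two]

theorem intCast_ne_zero_of_natAbs_prime {p : ℕ} (hp : p.Prime) {d : ℤ} (hd : d.natAbs.Prime)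
    (hpd : p ≠ d.natAbs) : (d : ZMod p) ≠ 0 := by
  rw [Ne, ZMod.intCast_zmod_eq_zero_iff_dvd, Int.natCast_dvd]
  exact fun h => hpd ((Nat.prime_dvd_prime_iff_eq hp hd).mp h)

section addLeg
variable {p : ℕ} [Fact p.Prime]

theorem neg_one_pow_val_addLeg {d : ℤ} (hd : (d : ZMod p) ≠ 0) :
    (-1 : ℤ) ^ (addLeg d p).val = legendreSym p d := by
  unfold addLeg
  split_ifs with h
  · exact ((legendreSym.eq_one_iff p hd).2 h).symm
  · exact ((legendreSym.eq_neg_one_iff p).2 h).symm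

theorem addLeg_mul {a b : ℤ} (ha : (a : ZMod p) ≠ 0) (hb : (b : ZMod p) ≠ 0) :
    addLeg (a * b) p = addLeg a p + addLeg b p := by
  apply neg_one_pow_val_injective
  simp only
  rw [neg_one_pow_val_add, neg_one_pow_val_addLeg ha, neg_one_pow_val_addLeg hb,
    neg_one_pow_val_addLeg (by push_cast; exact mul_ne_zero ha hb), legendreSym.mul]

theorem addLeg_neg_one_s15 (hp : p ≠ 2) : addLeg (-1) p = ((p / 2 : ℕ) : ZMod 2) := by
  apply neg_one_pow_val_injective
  simp only
  rw [neg_one_pow_val_natCast, neg_one_pow_val_addLeg (by simp), legendreSym.at_neg_one hp,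
    ZMod.χ₄_eq_neg_one_pow ((Fact.out : p.Prime).eq_two_or_odd.resolve_left hp)]

end addLeg

theorem addLeg_add_addLeg_swap {p q : ℕ} (hp : p.Prime) (hq : q.Prime) (hp2 : p ≠ 2)
    (hq2 : q ≠ 2) (hpq : p ≠ q) :
    addLeg q p + addLeg p q = addLeg (-1) p * addLeg (-1) q := by
  have := Fact.mk hp
  have := Fact.mk hq
  rw [addLeg_neg_one_s15 hp2, addLeg_neg_one_s15 hq2, ← Nat.cast_mul]
  apply neg_one_pow_val_injective
  simp only
  rw [neg_one_pow_val_natCast, neg_one_pow_val_add,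
    neg_one_pow_val_addLeg (intCast_ne_zero_of_natAbs_prime hp (by simpa) (by simpa)),
    neg_one_pow_val_addLeg
      (intCast_ne_zero_of_natAbs_prime hq (by simpa) (by simpa using hpq.symm)),
    mul_comm, legendreSym.quadratic_reciprocity hp2 hq2 hpq]

theorem neg_one_pow_val_sum_addLeg {ι : Type*} (s : Finset ι) (ℓ : ι → ℕ)
    (hp : ∀ i, (ℓ i).Prime) {d : ℤ} (hd : ∀ i, (d : ZMod (ℓ i)) ≠ 0) :
    (-1 : ℤ) ^ (∑ i ∈ s, addLeg d (ℓ i)).val = J(d | ∏ i ∈ s, ℓ i) := by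
  induction s using Finset.cons_induction with
  | empty => simp [jacobiSym.one_right]
  | cons a s ha ih =>
    have := Fact.mk (hp a)
    rw [Finset.sum_cons, Finset.prod_cons, neg_one_pow_val_add, ih, neg_one_pow_val_addLeg (hd a),
      jacobiSym.legendreSym.to_jacobiSym, jacobiSym.mul_right' _ (hp a).ne_zero
      (Finset.prod_ne_zero_iff.mpr fun i _ => (hp i).ne_zero)]

theorem jacobiSym_neg_three_of_mod_twelve {n : ℕ} (hn : n % 12 = 7) : J(-3 | n) = 1 := by
  have hodd : Odd n := Nat.odd_iff.mpr (by omega)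
  have h3 : J(3 | n) = -J(n | 3) := by
    exact_mod_cast jacobiSym.quadratic_reciprocity_three_mod_four (a := 3) (b := n) rfl (by omega)
  rw [jacobiSym.neg _ hodd, ZMod.χ₄_nat_three_mod_four (by omega), h3, jacobiSym.mod_left,
    show (n : ℤ) % (3 : ℕ) = 1 by omega, jacobiSym.one_left, neg_one_mul, neg_neg]

section CharTwo
variable {ι R : Type*} [Fintype ι] [DecidableEq ι] [CommRing R] [CharP R 2]

theorem det_fromBlocks_zero₁₁_of_charTwo (P E D : Matrix ι ι R) :
    (fromBlocks 0 P E D).det = P.det * E.det := by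
  have hswap : (fromBlocks 0 P E D).submatrix id (Equiv.sumComm ι ι) = fromBlocks P 0 D E := by
    ext (i | i) (j | j) <;> rfl
  have hsign : ((Equiv.Perm.sign (Equiv.sumComm ι ι) : ℤ) : R) = 1 := by
    rcases Int.units_eq_one_or (Equiv.Perm.sign (Equiv.sumComm ι ι)) with h | h <;>
      simp [h, CharTwo.neg_eq]
  rw [← det_fromBlocks_zero₁₂, ← hswap, det_permute', hsign, one_mul]

theorem det_fromBlocks_one₂₂_of_charTwo (M : Matrix ι ι R) (w v : ι → R) :
    (fromBlocks M (replicateCol Unit w) (replicateRow Unit v) 1).det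
      = (M + vecMulVec w v).det := by
  rw [det_fromBlocks_one₂₂, ← vecMulVec_eq, sub_eq_add_neg]
  congr 2
  ext i j
  exact CharTwo.neg_eq _

theorem det_fromBlocks_eq_det_add_vecMulVec_sq (M : Matrix ι ι R) (u v w : ι → R)
    (hcol : 1 ᵥ* M = u) (hw : ∑ i, w i = 0) :
    (fromBlocks (vecMulVec u (u + v) + vecMulVec v u) Mᵀ M (diagonal w)).det
      = (M + vecMulVec w v).det ^ 2 := by
  set E := M + vecMulVec w v
  set P := Mᵀ + vecMulVec (u + v) w
  have hE : 1 ᵥ* E = u := by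
    rw [vecMul_add, hcol, vecMul_vecMulVec, one_dotProduct, hw, zero_smul, add_zero]
  have hPone : (Mᵀ + vecMulVec (u + v) w) *ᵥ 1 = u := by
    rw [add_mulVec, mulVec_transpose, hcol, vecMulVec_mulVec, dotProduct_one, hw]
    simp
  have hDr : 1 ᵥ* diagonal w = w := by ext; simp [vecMul_diagonal]
  have hDl : diagonal w *ᵥ 1 = w := by ext; simp [mulVec_diagonal]
  have hreduce : fromBlocks 1 (vecMulVec (u + v) 1) 0 1
      * fromBlocks (vecMulVec u (u + v) + vecMulVec v u) Mᵀ M (diagonal w)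
      * fromBlocks 1 0 (vecMulVec 1 v) 1 = fromBlocks 0 P E (diagonal w) := by
    simp only [fromBlocks_multiply, Matrix.mul_one, Matrix.one_mul, Matrix.mul_zero,
      Matrix.zero_mul, zero_add, vecMulVec_mul, mul_vecMulVec, hcol, hDr, hDl, hPone]
    congr 1
    ext i j
    simp only [Matrix.add_apply, vecMulVec_apply, Pi.add_apply, Matrix.zero_apply]
    linear_combination (u i * u j + u i * v j + v i * u j) * CharTwo.two_eq_zero (R := R)
  have hPE : Pᵀ = (1 + vecMulVec w 1) * E := by
    rw [add_mul, Matrix.one_mul, vecMulVec_mul, hE]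
    ext i j
    simp only [P, E, transpose_add, transpose_transpose, transpose_vecMulVec, Matrix.add_apply,
      vecMulVec_apply, Pi.add_apply]
    ring
  have hdetP : P.det = E.det := by
    rw [← det_transpose, hPE, det_mul, vecMulVec_eq Unit,
      det_one_add_replicateCol_mul_replicateRow, one_dotProduct, hw, add_zero, one_mul]
  have := congrArg det hreduce
  rw [det_mul, det_mul, det_fromBlocks_zero₂₁, det_fromBlocks_zero₁₂,
    det_fromBlocks_zero₁₁_of_charTwo, hdetP] at this
  simpa [sq] using this
end CharTwo

section vecZ
variable {k : ℕ} {ℓ : Fin k → ℕ}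

theorem vecZ_mul (hp : ∀ i, (ℓ i).Prime) {a b : ℤ} (ha : ∀ i, (a : ZMod (ℓ i)) ≠ 0)
    (hb : ∀ i, (b : ZMod (ℓ i)) ≠ 0) : vecZ k ℓ (a * b) = vecZ k ℓ a + vecZ k ℓ b := by
  funext i
  have := Fact.mk (hp i)
  exact addLeg_mul (ha i) (hb i)

theorem sum_vecZ_neg_one_of_mod_four (hp : ∀ i, (ℓ i).Prime) (h : (∏ i, ℓ i) % 4 = 3) :
    ∑ i, vecZ k ℓ (-1) i = 1 :=
  neg_one_pow_val_injective <| (neg_one_pow_val_sum_addLeg _ _ hp fun i => by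
    have := Fact.mk (hp i); simp).trans <| by
    rw [jacobiSym.at_neg_one (Nat.odd_iff.mpr (by omega)), ZMod.χ₄_nat_three_mod_four h]; rfl

theorem sum_vecZ_neg_three_of_mod_twelve (hp : ∀ i, (ℓ i).Prime) (h3 : ∀ i, ℓ i ≠ 3)
    (h : (∏ i, ℓ i) % 12 = 7) : ∑ i, vecZ k ℓ (-3) i = 0 :=
  neg_one_pow_val_injective <| (neg_one_pow_val_sum_addLeg _ _ hp fun i =>
    intCast_ne_zero_of_natAbs_prime (d := -3) (hp i) (by norm_num) (by simpa using h3 i)).trans <|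
    by rw [jacobiSym_neg_three_of_mod_twelve h]; rfl

theorem one_vecMul_matA_add_diagonal (hp : ∀ i, (ℓ i).Prime) (h2 : ∀ i, ℓ i ≠ 2)
    (hinj : Function.Injective ℓ) :
    1 ᵥ* (matA k ℓ + diagonal (vecZ k ℓ (-1))) = (∑ i, vecZ k ℓ (-1) i) • vecZ k ℓ (-1) := by
  set u := vecZ k ℓ (-1)
  ext j
  have hA : ∑ i, matA k ℓ i j = u j * ∑ i ∈ Finset.univ.erase j, u i := by
    rw [← Finset.add_sum_erase _ _ (Finset.mem_univ j), Finset.mul_sum]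
    simp only [matA, of_apply, if_true]
    rw [Finset.sum_congr rfl fun i hi => if_neg (Finset.ne_of_mem_erase hi),
      ← Finset.sum_add_distrib]
    refine Finset.sum_congr rfl fun i hi => ?_
    exact addLeg_add_addLeg_swap (hp j) (hp i) (h2 j) (h2 i)
      (hinj.ne (Finset.ne_of_mem_erase hi).symm)
  have hu : u j * u j = u j := by generalize u j = x; revert x; decide
  change ∑ i, 1 * (matA k ℓ + diagonal u) i j = (∑ i, u i) * u j
  simp only [one_mul, Matrix.add_apply, Finset.sum_add_distrib, hA, diagonal_apply,
    Finset.sum_ite_eq', Finset.mem_univ, if_true]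
  rw [← Finset.add_sum_erase _ _ (Finset.mem_univ j), add_mul, hu]
  ring
end vecZ

theorem det_identity_mod24_7_general (k : ℕ) (ℓ : Fin k → ℕ) (n : ℕ)
    (hprime : ∀ i, (ℓ i).Prime) (hcop : ∀ i, ℓ i ≠ 2 ∧ ℓ i ≠ 3)
    (hinj : Function.Injective ℓ)
    (hn : n = ∏ i, ℓ i) (hmod : n % 24 = 7) :
    (Matrix.fromBlocks (matA k ℓ + Matrix.diagonal (vecZ k ℓ (-1)))
        (Matrix.replicateCol Unit (vecZ k ℓ (-3)))
        (Matrix.replicateRow Unit (vecZ k ℓ 2)) (1 : Matrix Unit Unit (ZMod 2))).det =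
      (Matrix.fromBlocks
        (Matrix.vecMulVec (vecZ k ℓ (-1)) (vecZ k ℓ (-2)) +
          Matrix.vecMulVec (vecZ k ℓ 2) (vecZ k ℓ (-1)))
        ((matA k ℓ)ᵀ + Matrix.diagonal (vecZ k ℓ (-1)))
        (matA k ℓ + Matrix.diagonal (vecZ k ℓ (-1)))
        (Matrix.diagonal (vecZ k ℓ (-3)))).det := by
  subst hn
  set u := vecZ k ℓ (-1)
  have hcol : 1 ᵥ* (matA k ℓ + diagonal u) = u := by
    rw [one_vecMul_matA_add_diagonal hprime (fun i => (hcop i).1) hinj,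
      sum_vecZ_neg_one_of_mod_four hprime (by omega), one_smul]
  have hw : ∑ i, vecZ k ℓ (-3) i = 0 :=
    sum_vecZ_neg_three_of_mod_twelve hprime (fun i => (hcop i).2) (by omega)
  have hz : vecZ k ℓ (-2) = u + vecZ k ℓ 2 := by
    rw [show (-2 : ℤ) = -1 * 2 by norm_num]
    exact vecZ_mul hprime (fun i => by have := Fact.mk (hprime i); simp)
      fun i => intCast_ne_zero_of_natAbs_prime (hprime i) Nat.prime_two (hcop i).1
  rw [det_fromBlocks_one₂₂_of_charTwo, hz,
    show (matA k ℓ)ᵀ + diagonal u = (matA k ℓ + diagonal u)ᵀ by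
      rw [transpose_add, diagonal_transpose],
    det_fromBlocks_eq_det_add_vecMulVec_sq _ _ _ _ hcol hw, ZMod.pow_card]

/-- For `n ≡ 7 (mod 24)` square-free with prime factors `ℓ₁,…,ℓ_k`,
`det([[A + D_{-1}, z_{-3}],[z₂ᵀ, 1]]) = det([[z_{-1}z_{-2}ᵀ + z₂z_{-1}ᵀ, Aᵀ + D_{-1}],
[A + D_{-1}, D_{-3}]])` in `𝔽₂`. -/
theorem det_identity_mod24_7 (k : ℕ) (ℓ : Fin k → ℕ) (n : ℕ)
    (hprime : ∀ i, (ℓ i).Prime) (hcop : ∀ i, ℓ i ≠ 2 ∧ ℓ i ≠ 3)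
    (hinj : Function.Injective ℓ)
    (hn : n = ∏ i, ℓ i) (hsf : Squarefree n) (hmod : n % 24 = 7) :
    (Matrix.fromBlocks (matA k ℓ + Matrix.diagonal (vecZ k ℓ (-1)))
        (Matrix.replicateCol Unit (vecZ k ℓ (-3)))
        (Matrix.replicateRow Unit (vecZ k ℓ 2)) (1 : Matrix Unit Unit (ZMod 2))).det =
      (Matrix.fromBlocks
        (Matrix.vecMulVec (vecZ k ℓ (-1)) (vecZ k ℓ (-2)) +
          Matrix.vecMulVec (vecZ k ℓ 2) (vecZ k ℓ (-1)))
        ((matA k ℓ)ᵀ + Matrix.diagonal (vecZ k ℓ (-1)))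
        (matA k ℓ + Matrix.diagonal (vecZ k ℓ (-1)))
        (Matrix.diagonal (vecZ k ℓ (-3)))).det :=
  det_identity_mod24_7_general k ℓ n hprime hcop hinj hn hmod
end
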